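/- arXiv:2505.09800 — 6 statements merged into one kernel-verified Lean document; each statement's English description precedes it below -/
import Mathlib

section
/- Let S be a smooth positive function of x with Ω₁' nonzero, and define Ω₁ = S_xx/S² - (5/4)S_x²/S³ + 4, Ω₂ = S_xxx/S^{5/2} - (9/2)S_x S_xx/S^{7/2} + (15/4)S_x³/S^{9/2}, and Ω₃ = S_xxxx/S³ - 7 S_x S_xxx/S⁴ + (63/4)S_x² S_xx/S⁵ + 19 S_xx/S² - (315/32)S_x⁴/S⁶ - (95/4)S_x²/S³ + 34. Then Ω₃ = Ω₂·(dΩ₂/dx)/(dΩ₁/dx) + (9/2)Ω₁² - 17Ω₁ + 30. -/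
set_option maxHeartbeats 3200000


/-- For a smooth positive `S`, with
`Ω₁ = S''/S² - (5/4)S'²/S³ + 4`,
`Ω₂ = S'''/S^{5/2} - (9/2)S'S''/S^{7/2} + (15/4)S'³/S^{9/2}`, and
`Ω₃ = S''''/S³ - 7S'S'''/S⁴ + (63/4)S'²S''/S⁵ + 19S''/S² - (315/32)S'⁴/S⁶
      - (95/4)S'²/S³ + 34`,
one has `Ω₃ = Ω₂·Ω₂'/Ω₁' + (9/2)Ω₁² - 17Ω₁ + 30` wherever `Ω₁' ≠ 0`. -/
theorem omega3_identity (S : ℝ → ℝ)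
    (hS : ContDiff ℝ (⊤ : ℕ∞) S) (hSpos : ∀ x, 0 < S x)
    (Ω₁ Ω₂ Ω₃ : ℝ → ℝ)
    (hΩ₁ : Ω₁ = fun x => iteratedDeriv 2 S x / (S x) ^ 2
      - (5 / 4) * (deriv S x) ^ 2 / (S x) ^ 3 + 4)
    (hΩ₂ : Ω₂ = fun x => iteratedDeriv 3 S x / (S x) ^ ((5 : ℝ) / 2)
      - (9 / 2) * (deriv S x * iteratedDeriv 2 S x) / (S x) ^ ((7 : ℝ) / 2)
      + (15 / 4) * (deriv S x) ^ 3 / (S x) ^ ((9 : ℝ) / 2))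
    (hΩ₃ : Ω₃ = fun x => iteratedDeriv 4 S x / (S x) ^ 3
      - 7 * (deriv S x * iteratedDeriv 3 S x) / (S x) ^ 4
      + (63 / 4) * ((deriv S x) ^ 2 * iteratedDeriv 2 S x) / (S x) ^ 5
      + 19 * iteratedDeriv 2 S x / (S x) ^ 2
      - (315 / 32) * (deriv S x) ^ 4 / (S x) ^ 6
      - (95 / 4) * (deriv S x) ^ 2 / (S x) ^ 3 + 34) :
    ∀ x, deriv Ω₁ x ≠ 0 →
      Ω₃ x = Ω₂ x * deriv Ω₂ x / deriv Ω₁ x + (9 / 2) * (Ω₁ x) ^ 2 - 17 * Ω₁ x + 30 := by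
  intro x hx
  have ha : (0:ℝ) < S x := hSpos x
  have hane : S x ≠ 0 := ne_of_gt ha
  have hdiff : ∀ n : ℕ, Differentiable ℝ (iteratedDeriv n S) := fun n =>
    hS.differentiable_iteratedDeriv n (by
      exact_mod_cast ENat.coe_lt_top n)
  have hD : ∀ n : ℕ, ∀ y : ℝ, HasDerivAt (iteratedDeriv n S) (iteratedDeriv (n+1) S y) y := by
    intro n y
    rw [iteratedDeriv_succ]
    exact ((hdiff n) y).hasDerivAt
  have hS1 : ∀ y : ℝ, HasDerivAt S (deriv S y) y := by
    intro y
    have := hD 0 y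
    simpa [iteratedDeriv_one, iteratedDeriv_zero] using this
  have hS2 : ∀ y : ℝ, HasDerivAt (deriv S) (iteratedDeriv 2 S y) y := by
    intro y
    have := hD 1 y
    simpa [iteratedDeriv_one] using this
  -- derivative of Ω₁
  have hd1 : deriv Ω₁ x = iteratedDeriv 3 S x / (S x) ^ 2
      - (9/2) * (deriv S x * iteratedDeriv 2 S x) / (S x) ^ 3
      + (15/4) * (deriv S x) ^ 3 / (S x) ^ 4 := by
    have h1 : HasDerivAt (fun y => iteratedDeriv 2 S y / (S y) ^ 2)
        ((iteratedDeriv 3 S x * (S x) ^ 2 - iteratedDeriv 2 S x *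
          (2 * S x ^ 1 * deriv S x)) / ((S x) ^ 2) ^ 2) x :=
      (hD 2 x).div ((hS1 x).pow 2) (pow_ne_zero 2 hane)
    have h2 : HasDerivAt (fun y => (5:ℝ)/4 * (deriv S y) ^ 2 / (S y) ^ 3)
        (((5:ℝ)/4 * (2 * deriv S x ^ 1 * iteratedDeriv 2 S x) * (S x) ^ 3
          - (5:ℝ)/4 * (deriv S x) ^ 2 * (3 * S x ^ 2 * deriv S x)) / ((S x) ^ 3) ^ 2) x :=
      (((hS2 x).pow 2).const_mul ((5:ℝ)/4)).div ((hS1 x).pow 3) (pow_ne_zero 3 hane)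
    have h3 : HasDerivAt Ω₁ ((iteratedDeriv 3 S x * (S x) ^ 2 - iteratedDeriv 2 S x *
          (2 * S x ^ 1 * deriv S x)) / ((S x) ^ 2) ^ 2
        - ((5:ℝ)/4 * (2 * deriv S x ^ 1 * iteratedDeriv 2 S x) * (S x) ^ 3
          - (5:ℝ)/4 * (deriv S x) ^ 2 * (3 * S x ^ 2 * deriv S x)) / ((S x) ^ 3) ^ 2) x := by
      rw [hΩ₁]
      exact (h1.sub h2).add_const 4
    rw [h3.deriv]
    field_simp
    ring
  -- derivative of Ω₂
  have hrp : ∀ p : ℝ, (S x) ^ p ≠ 0 := fun p => (Real.rpow_pos_of_pos ha p).ne'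
  have hpow : ∀ p : ℝ, ∀ y : ℝ, HasDerivAt (fun z => (S z) ^ p)
      (deriv S y * p * S y ^ (p - 1)) y := fun p y =>
    (hS1 y).rpow_const (Or.inl (hSpos y).ne')
  have hd2 : deriv Ω₂ x =
      (iteratedDeriv 4 S x * S x ^ ((5:ℝ)/2)
        - iteratedDeriv 3 S x * (deriv S x * ((5:ℝ)/2) * S x ^ ((5:ℝ)/2 - 1)))
          / (S x ^ ((5:ℝ)/2)) ^ 2
      - ((9:ℝ)/2 * (iteratedDeriv 2 S x * iteratedDeriv 2 S x
            + deriv S x * iteratedDeriv 3 S x) * S x ^ ((7:ℝ)/2)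
          - (9:ℝ)/2 * (deriv S x * iteratedDeriv 2 S x) *
            (deriv S x * ((7:ℝ)/2) * S x ^ ((7:ℝ)/2 - 1))) / (S x ^ ((7:ℝ)/2)) ^ 2
      + ((15:ℝ)/4 * (3 * deriv S x ^ 2 * iteratedDeriv 2 S x) * S x ^ ((9:ℝ)/2)
          - (15:ℝ)/4 * deriv S x ^ 3 *
            (deriv S x * ((9:ℝ)/2) * S x ^ ((9:ℝ)/2 - 1))) / (S x ^ ((9:ℝ)/2)) ^ 2 := by
    have h1 := (hD 3 x).div (hpow ((5:ℝ)/2) x) (hrp _)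
    have h2 := ((((hS2 x).mul (hD 2 x)).const_mul ((9:ℝ)/2)).div
      (hpow ((7:ℝ)/2) x) (hrp _))
    have h3 := ((((hS2 x).pow 3).const_mul ((15:ℝ)/4)).div
      (hpow ((9:ℝ)/2) x) (hrp _))
    rw [hΩ₂]
    refine Eq.trans ((h1.sub h2).add h3).deriv ?_
    norm_num
  -- replace √S by u
  obtain ⟨u, hu, hu2⟩ : ∃ u : ℝ, 0 < u ∧ u ^ 2 = S x :=
    ⟨Real.sqrt (S x), Real.sqrt_pos.2 ha, Real.sq_sqrt ha.le⟩
  have hk : ∀ k : ℕ, S x ^ ((k:ℝ)/2) = u ^ k := by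
    intro k
    rw [← hu2, ← Real.rpow_natCast u 2, ← Real.rpow_natCast _ k, ← Real.rpow_mul hu.le,
      ]
    congr 1
    push_cast
    ring
  have h3' : S x ^ ((3:ℝ)/2) = u ^ 3 := by have := hk 3; norm_num at this; exact this
  have h5' : S x ^ ((5:ℝ)/2) = u ^ 5 := by have := hk 5; norm_num at this; exact this
  have h7' : S x ^ ((7:ℝ)/2) = u ^ 7 := by have := hk 7; norm_num at this; exact this
  have h9' : S x ^ ((9:ℝ)/2) = u ^ 9 := by have := hk 9; norm_num at this; exact this
  have e5 : (5:ℝ)/2 - 1 = 3/2 := by norm_num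
  have e7 : (7:ℝ)/2 - 1 = 5/2 := by norm_num
  have e9 : (9:ℝ)/2 - 1 = 7/2 := by norm_num
  have hune : u ≠ 0 := hu.ne'
  have key : Ω₂ x * deriv Ω₂ x = deriv Ω₁ x *
      (Ω₃ x - (9/2) * (Ω₁ x) ^ 2 + 17 * Ω₁ x - 30) := by
    rw [hd1, hd2, hΩ₁, hΩ₂, hΩ₃]
    simp only []
    rw [e5, e7, e9, h3', h5', h7', h9', ← hu2]
    field_simp
    ring
  field_simp
  linear_combination (-2 : ℝ) * key
end

section
/- For constants C₁, C₂ > 0, C₃, λ < 0, and α₁ = 1, the function u(x,t) = C₂[C₁ - 4λ tan((λ/√2)(t - α₁x + C₃))] satisfies u_t = λ u_x/√S with S = u_{xxx}/u_x - (3/2)(u_{xx}/u_x)², on any open set where the tangent is defined and S > 0. -/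
lemma aux_lin (a b y : ℝ) : HasDerivAt (fun y : ℝ => a * y + b) a y := by
  simpa using ((hasDerivAt_id y).const_mul a).add_const b

lemma aux_d1 (d c a b : ℝ) {y : ℝ} (hy : Real.cos (a * y + b) ≠ 0) :
    HasDerivAt (fun y => d + c * Real.tan (a * y + b)) (c * a / Real.cos (a * y + b) ^ 2) y := by
  have h2 := (Real.hasDerivAt_tan hy).comp y (aux_lin a b y)
  have h3 := (h2.const_mul c).const_add d
  convert h3 using 1
  · rfl
  · rfl
  · rfl
  field_simp

lemma aux_d2 (c a b : ℝ) {y : ℝ} (hy : Real.cos (a * y + b) ≠ 0) :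
    HasDerivAt (fun y => c * a / Real.cos (a * y + b) ^ 2)
      (2 * c * a ^ 2 * Real.sin (a * y + b) / Real.cos (a * y + b) ^ 3) y := by
  have hcos : HasDerivAt (fun y => Real.cos (a * y + b)) (-Real.sin (a * y + b) * a) y :=
    (Real.hasDerivAt_cos _).comp y (aux_lin a b y)
  have hsq := hcos.pow 2
  have hne : Real.cos (a * y + b) ^ 2 ≠ 0 := pow_ne_zero _ hy
  have h := (hsq.inv hne).const_mul (c * a)
  have heq : (fun y => c * a / Real.cos (a * y + b) ^ 2)
      = fun y => c * a * (Real.cos (a * y + b) ^ 2)⁻¹ := by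
    funext z; rw [div_eq_mul_inv]
  rw [heq]
  convert h using 1
  · rfl
  · rfl
  · rfl
  simp only [Pi.pow_apply]
  field_simp
  ring

lemma aux_d3 (c a b : ℝ) {y : ℝ} (hy : Real.cos (a * y + b) ≠ 0) :
    HasDerivAt (fun y => 2 * c * a ^ 2 * Real.sin (a * y + b) / Real.cos (a * y + b) ^ 3)
      (2 * c * a ^ 3 * (Real.cos (a * y + b) ^ 2 + 3 * Real.sin (a * y + b) ^ 2)
        / Real.cos (a * y + b) ^ 4) y := by
  have hsin : HasDerivAt (fun y => Real.sin (a * y + b)) (Real.cos (a * y + b) * a) y :=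
    (Real.hasDerivAt_sin _).comp y (aux_lin a b y)
  have hcos : HasDerivAt (fun y => Real.cos (a * y + b)) (-Real.sin (a * y + b) * a) y :=
    (Real.hasDerivAt_cos _).comp y (aux_lin a b y)
  have hcu := hcos.pow 3
  have hne : Real.cos (a * y + b) ^ 3 ≠ 0 := pow_ne_zero _ hy
  have h := ((hsin.const_mul (2 * c * a ^ 2)).div hcu hne)
  convert h using 1
  · rfl
  · rfl
  · rfl
  simp only [Pi.pow_apply]
  field_simp
  ring

/-- The Schwarzian derivative `S[f] = f'''/f' - (3/2)(f''/f')²`. -/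
noncomputable def schwarzian (f : ℝ → ℝ) (x : ℝ) : ℝ :=
  iteratedDeriv 3 f x / deriv f x - (3 / 2) * (iteratedDeriv 2 f x / deriv f x) ^ 2

/-- Schwarzian of `d + c·tan(a·x + b)` is `2a²` wherever `cos(ax+b) ≠ 0`. -/
lemma schwarzian_tan (d c a b : ℝ) (hc : c ≠ 0) (ha : a ≠ 0) {x : ℝ}
    (hx : Real.cos (a * x + b) ≠ 0) :
    schwarzian (fun y => d + c * Real.tan (a * y + b)) x = 2 * a ^ 2 := by
  set f : ℝ → ℝ := fun y => d + c * Real.tan (a * y + b) with hf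
  set O : Set ℝ := {y | Real.cos (a * y + b) ≠ 0} with hO
  have hOopen : IsOpen O :=
    isOpen_compl_singleton.preimage (by continuity : Continuous fun y => Real.cos (a * y + b))
  have hxO : x ∈ O := hx
  -- first derivative
  have hd1 : ∀ y ∈ O, deriv f y = c * a / Real.cos (a * y + b) ^ 2 :=
    fun y hy => (aux_d1 d c a b hy).deriv
  have hd1ev : ∀ y ∈ O, deriv f =ᶠ[nhds y] fun z => c * a / Real.cos (a * z + b) ^ 2 :=
    fun y hy => Filter.eventuallyEq_of_mem (hOopen.mem_nhds hy) (fun z hz => hd1 z hz)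
  -- second derivative
  have hd2 : ∀ y ∈ O, deriv (deriv f) y
      = 2 * c * a ^ 2 * Real.sin (a * y + b) / Real.cos (a * y + b) ^ 3 := by
    intro y hy
    rw [(hd1ev y hy).deriv_eq]
    exact (aux_d2 c a b hy).deriv
  have hd2ev : deriv (deriv f) =ᶠ[nhds x]
      fun z => 2 * c * a ^ 2 * Real.sin (a * z + b) / Real.cos (a * z + b) ^ 3 :=
    Filter.eventuallyEq_of_mem (hOopen.mem_nhds hxO) (fun z hz => hd2 z hz)
  -- third derivative
  have hd3 : deriv (deriv (deriv f)) x
      = 2 * c * a ^ 3 * (Real.cos (a * x + b) ^ 2 + 3 * Real.sin (a * x + b) ^ 2)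
          / Real.cos (a * x + b) ^ 4 := by
    rw [hd2ev.deriv_eq]
    exact (aux_d3 c a b hx).deriv
  have h2 : iteratedDeriv 2 f x
      = 2 * c * a ^ 2 * Real.sin (a * x + b) / Real.cos (a * x + b) ^ 3 := by
    rw [iteratedDeriv_succ, iteratedDeriv_one]
    exact hd2 x hxO
  have h3 : iteratedDeriv 3 f x
      = 2 * c * a ^ 3 * (Real.cos (a * x + b) ^ 2 + 3 * Real.sin (a * x + b) ^ 2)
          / Real.cos (a * x + b) ^ 4 := by
    rw [iteratedDeriv_succ, iteratedDeriv_succ, iteratedDeriv_one]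
    exact hd3
  have hpyth := Real.sin_sq_add_cos_sq (a * x + b)
  rw [schwarzian, h2, h3, hd1 x hxO]
  field_simp
  nlinarith [Real.sin_sq_add_cos_sq (a * x + b), sq_nonneg (Real.cos (a*x+b)), sq_nonneg c, sq_nonneg a]

/-- The traveling tangent solution `u(x,t) = C₂[C₁ - 4λ tan((λ/√2)(t - x + C₃))]`
(with `α₁ = 1`, `λ < 0`, `C₁, C₂ > 0`) satisfies `u_t = λ u_x/√S` wherever the
tangent is defined and `S > 0`. -/
theorem tan_traveling_solution (C₁ C₂ C₃ lam : ℝ)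
    (hC₁ : 0 < C₁) (hC₂ : 0 < C₂) (hlam : lam < 0)
    (u : ℝ → ℝ → ℝ)
    (hu : u = fun x t => C₂ * (C₁ - 4 * lam * Real.tan ((lam / Real.sqrt 2) * (t - x + C₃)))) :
    ∀ x t : ℝ, Real.cos ((lam / Real.sqrt 2) * (t - x + C₃)) ≠ 0 →
      0 < schwarzian (fun x' => u x' t) x →
      deriv (fun t' => u x t') t =
        lam * deriv (fun x' => u x' t) x / Real.sqrt (schwarzian (fun x' => u x' t) x) := by
  subst hu
  intro x t hcos _
  have hs2 : Real.sqrt 2 ≠ 0 := by positivity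
  set m : ℝ := lam / Real.sqrt 2 with hm
  have hmne : m ≠ 0 := div_ne_zero (ne_of_lt hlam) hs2
  set c : ℝ := -(4 * lam) * C₂ with hc
  have hcpos : 0 < c := by rw [hc]; nlinarith
  have hcne : c ≠ 0 := ne_of_gt hcpos
  -- the spatial function
  have hfx : (fun x' => (fun x t => C₂ * (C₁ - 4 * lam * Real.tan (m * (t - x + C₃)))) x' t)
      = fun y => C₂ * C₁ + c * Real.tan (-m * y + m * (t + C₃)) := by
    funext y
    have harg : -m * y + m * (t + C₃) = m * (t - y + C₃) := by ring
    rw [harg, hc]; ring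
  have hcosx : Real.cos (-m * x + m * (t + C₃)) ≠ 0 := by
    have harg : -m * x + m * (t + C₃) = m * (t - x + C₃) := by ring
    rw [harg]; exact hcos
  -- Schwarzian value
  have hm2 : 2 * (-m) ^ 2 = lam ^ 2 := by
    rw [hm]
    rw [neg_pow, div_pow, Real.sq_sqrt (by norm_num : (2:ℝ) ≥ 0 )]
    ring
  have hS : schwarzian (fun x' =>
      (fun x t => C₂ * (C₁ - 4 * lam * Real.tan (m * (t - x + C₃)))) x' t) x = lam ^ 2 := by
    rw [hfx, schwarzian_tan (C₂ * C₁) c (-m) (m * (t + C₃)) hcne (neg_ne_zero.mpr hmne) hcosx]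
    exact hm2
  have hsqrtS : Real.sqrt (lam ^ 2) = -lam := by
    rw [Real.sqrt_sq_eq_abs, abs_of_neg hlam]
  -- spatial derivative
  have hdx : deriv (fun x' =>
      (fun x t => C₂ * (C₁ - 4 * lam * Real.tan (m * (t - x + C₃)))) x' t) x
      = c * (-m) / Real.cos (-m * x + m * (t + C₃)) ^ 2 := by
    rw [hfx]
    exact (aux_d1 (C₂ * C₁) c (-m) (m * (t + C₃)) hcosx).deriv
  -- time derivative
  have hft : (fun t' => (fun x t => C₂ * (C₁ - 4 * lam * Real.tan (m * (t - x + C₃)))) x t')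
      = fun s => C₂ * C₁ + c * Real.tan (m * s + m * (C₃ - x)) := by
    funext s
    have harg : m * s + m * (C₃ - x) = m * (s - x + C₃) := by ring
    rw [harg, hc]; ring
  have hcost : Real.cos (m * t + m * (C₃ - x)) ≠ 0 := by
    have harg : m * t + m * (C₃ - x) = m * (t - x + C₃) := by ring
    rw [harg]; exact hcos
  have hdt : deriv (fun t' =>
      (fun x t => C₂ * (C₁ - 4 * lam * Real.tan (m * (t - x + C₃)))) x t') t
      = c * m / Real.cos (m * t + m * (C₃ - x)) ^ 2 := by
    rw [hft]
    exact (aux_d1 (C₂ * C₁) c m (m * (C₃ - x)) hcost).deriv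
  rw [hdt, hdx, hS, hsqrtS]
  have harg1 : m * t + m * (C₃ - x) = m * (t - x + C₃) := by ring
  have harg2 : -m * x + m * (t + C₃) = m * (t - x + C₃) := by ring
  rw [harg1, harg2]
  have hlamne : lam ≠ 0 := ne_of_lt hlam
  have hcos2 : Real.cos (m * (t - x + C₃)) ^ 2 ≠ 0 := pow_ne_zero _ hcos
  field_simp
end

section
/- If H: (0,∞) → ℝ is given by H(P) = ±(P/a₁)(a₁²C₁P - 2a₁²λ² - 4α₁)^{1/2} (radicand positive), then H satisfies √2 a₁ λ P = -(2a₁²P H H' - 3a₁²H² - 4α₁P²)^{1/2} up to sign, i.e., 2a₁²P H(P) H'(P) - 3a₁²H(P)² - 4α₁P² = 2a₁²λ²P². -/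
/-- The explicit function `H(P) = ±(P/a₁)(a₁²C₁P - 2a₁²λ² - 4α₁)^{1/2}` satisfies
`2a₁²PHH' - 3a₁²H² - 4α₁P² = 2a₁²λ²P²` wherever the radicand is positive. -/
theorem reduced_ODE_case_Z1Z3Z7 (a₁ lam C₁ α₁ ε : ℝ)
    (ha₁ : a₁ ≠ 0) (hα₁ : α₁ = 1 ∨ α₁ = -1) (hε : ε = 1 ∨ ε = -1)
    (H : ℝ → ℝ)
    (hH : H = fun P => ε * (P / a₁) *
      Real.sqrt (a₁ ^ 2 * C₁ * P - 2 * a₁ ^ 2 * lam ^ 2 - 4 * α₁)) :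
    ∀ P : ℝ, 0 < P → 0 < a₁ ^ 2 * C₁ * P - 2 * a₁ ^ 2 * lam ^ 2 - 4 * α₁ →
      2 * a₁ ^ 2 * P * H P * deriv H P - 3 * a₁ ^ 2 * (H P) ^ 2 - 4 * α₁ * P ^ 2 =
        2 * a₁ ^ 2 * lam ^ 2 * P ^ 2 := by
  intro P hP hrad
  set R : ℝ → ℝ := fun P => a₁ ^ 2 * C₁ * P - 2 * a₁ ^ 2 * lam ^ 2 - 4 * α₁ with hRdef
  have hRP : R P ≠ 0 := ne_of_gt hrad
  have hR : HasDerivAt R (a₁ ^ 2 * C₁) P := by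
    have : HasDerivAt (fun P : ℝ => a₁ ^ 2 * C₁ * P) (a₁ ^ 2 * C₁) P := by
      simpa using (hasDerivAt_id P).const_mul (a₁ ^ 2 * C₁)
    simpa [hRdef] using (this.sub_const (2 * a₁ ^ 2 * lam ^ 2)).sub_const (4 * α₁)
  have hsqrt : HasDerivAt (fun P => Real.sqrt (R P))
      (a₁ ^ 2 * C₁ / (2 * Real.sqrt (R P))) P := by
    have := (Real.hasDerivAt_sqrt hRP).comp P hR
    simpa [div_eq_mul_inv, mul_comm, Function.comp_def] using this
  have hlin : HasDerivAt (fun P : ℝ => ε * (P / a₁)) (ε / a₁) P := by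
    have : HasDerivAt (fun P : ℝ => ε / a₁ * P) (ε / a₁) P := by
      simpa using (hasDerivAt_id P).const_mul (ε / a₁)
    have h2 : (fun P : ℝ => ε * (P / a₁)) = fun P : ℝ => ε / a₁ * P := by
      funext x; ring
    rw [h2]; exact this
  have hHd : HasDerivAt H
      (ε / a₁ * Real.sqrt (R P) + ε * (P / a₁) * (a₁ ^ 2 * C₁ / (2 * Real.sqrt (R P)))) P := by
    rw [hH]; exact hlin.mul hsqrt
  have hderiv := hHd.deriv
  rw [hderiv, hH]
  have hs : Real.sqrt (R P) > 0 := Real.sqrt_pos.mpr hrad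
  have hs2 : Real.sqrt (R P) ^ 2 = R P := Real.sq_sqrt hrad.le
  have hε2 : ε ^ 2 = 1 := by rcases hε with h | h <;> simp [h]
  simp only [hRdef] at hs hs2 ⊢
  set s := Real.sqrt (a₁ ^ 2 * C₁ * P - 2 * a₁ ^ 2 * lam ^ 2 - 4 * α₁) with hsdef
  have hsne : s ≠ 0 := ne_of_gt hs
  field_simp
  linear_combination (a₁^2*P*C₁ - s^2) * hε2 - hs2
end

section
/- If v = v(x,t) is smooth with v_x > 0 and satisfies v_t = S[v]/v_x², and ṽ is defined by ṽ_x = v_x², then ṽ satisfies ṽ_t = ṽ_{xxx}/ṽ_x^{3/2} - (3/2)ṽ_{xx}²/ṽ_x^{5/2} up to an additive function of t only; precisely, ∂_x(ṽ_t) = ∂_x(ṽ_{xxx}/ṽ_x^{3/2} - (3/2)ṽ_{xx}²/ṽ_x^{5/2}). -/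
open ContDiff

section aux
variable {F : ℝ → ℝ → ℝ}

lemma hasDerivAt_partial_x (h : ContDiff ℝ ∞ (fun p : ℝ × ℝ => F p.1 p.2)) (a b : ℝ) :
    HasDerivAt (fun x' => F x' b)
      (fderiv ℝ (fun p : ℝ × ℝ => F p.1 p.2) (a, b) (1, 0)) a := by
  have hline : HasDerivAt (fun x' : ℝ => (x', b)) ((1 : ℝ), (0 : ℝ)) a :=
    (hasDerivAt_id a).prodMk (hasDerivAt_const a b)
  exact ((h.differentiable (by norm_cast) (a, b)).hasFDerivAt).comp_hasDerivAt a hline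

lemma hasDerivAt_partial_t (h : ContDiff ℝ ∞ (fun p : ℝ × ℝ => F p.1 p.2)) (a b : ℝ) :
    HasDerivAt (fun t' => F a t')
      (fderiv ℝ (fun p : ℝ × ℝ => F p.1 p.2) (a, b) (0, 1)) b := by
  have hline : HasDerivAt (fun t' : ℝ => (a, t')) ((0 : ℝ), (1 : ℝ)) b :=
    (hasDerivAt_const b a).prodMk (hasDerivAt_id b)
  exact ((h.differentiable (by norm_cast) (a, b)).hasFDerivAt).comp_hasDerivAt b hline

lemma smooth_fderiv_apply (h : ContDiff ℝ ∞ (fun p : ℝ × ℝ => F p.1 p.2)) (w : ℝ × ℝ) :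
    ContDiff ℝ ∞ (fun p : ℝ × ℝ => fderiv ℝ (fun q : ℝ × ℝ => F q.1 q.2) p w) :=
  (ContinuousLinearMap.apply ℝ ℝ w).contDiff.comp (h.fderiv_right (by exact_mod_cast le_top))

lemma clairaut (h : ContDiff ℝ ∞ (fun p : ℝ × ℝ => F p.1 p.2)) (x t : ℝ) :
    deriv (fun x' => deriv (fun t' => F x' t') t) x
      = deriv (fun t' => deriv (fun x' => F x' t') x) t := by
  set Φ : ℝ × ℝ → ℝ := fun p => F p.1 p.2 with hΦ
  have hG : ContDiff ℝ ∞ (fderiv ℝ Φ) := h.fderiv_right (by exact_mod_cast le_top)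
  have hH : HasFDerivAt (fderiv ℝ Φ) (fderiv ℝ (fderiv ℝ Φ) (x, t)) (x, t) :=
    (hG.differentiable (by norm_cast) (x, t)).hasFDerivAt
  have d1 : HasDerivAt (fun x' => fderiv ℝ Φ (x', t) (0, 1))
      (fderiv ℝ (fderiv ℝ Φ) (x, t) (1, 0) (0, 1)) x := by
    have hline : HasDerivAt (fun x' : ℝ => (x', t)) ((1 : ℝ), (0 : ℝ)) x :=
      (hasDerivAt_id x).prodMk (hasDerivAt_const x t)
    have := (((ContinuousLinearMap.apply ℝ ℝ ((0 : ℝ), (1 : ℝ))).hasFDerivAt.comp (x, t)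
      hH).comp_hasDerivAt x hline)
    exact this
  have d2 : HasDerivAt (fun t' => fderiv ℝ Φ (x, t') (1, 0))
      (fderiv ℝ (fderiv ℝ Φ) (x, t) (0, 1) (1, 0)) t := by
    have hline : HasDerivAt (fun t' : ℝ => (x, t')) ((0 : ℝ), (1 : ℝ)) t :=
      (hasDerivAt_const t x).prodMk (hasDerivAt_id t)
    have := (((ContinuousLinearMap.apply ℝ ℝ ((1 : ℝ), (0 : ℝ))).hasFDerivAt.comp (x, t)
      hH).comp_hasDerivAt t hline)
    exact this
  have e1 : (fun x' => deriv (fun t' => F x' t') t) = fun x' => fderiv ℝ Φ (x', t) (0, 1) :=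
    funext fun a => (hasDerivAt_partial_t h a t).deriv
  have e2 : (fun t' => deriv (fun x' => F x' t') x) = fun t' => fderiv ℝ Φ (x, t') (1, 0) :=
    funext fun b => (hasDerivAt_partial_x h x b).deriv
  rw [e1, e2, d1.deriv, d2.deriv]
  exact h.contDiffAt.isSymmSndFDerivAt (by simp; exact WithTop.coe_le_coe.mpr le_top) _ _

end aux

lemma key (u : ℝ → ℝ) (hu : ContDiff ℝ ∞ u) (hp : ∀ a, 0 < u a) (x : ℝ) :
    2 * u x * deriv (fun a => (deriv (deriv u) a / u a
        - 3 / 2 * (deriv u a / u a * (deriv u a / u a))) / (u a * u a)) x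
      = deriv (fun a =>
          2 * (deriv u a * deriv u a + u a * deriv (deriv u) a) / (u a * (u a * u a))
          - 3 / 2 * (2 * (u a * deriv u a) * (2 * (u a * deriv u a)))
              / (u a * (u a * (u a * (u a * u a))))) x := by
  have hu1 : ContDiff ℝ ∞ (deriv u) := (contDiff_infty_iff_deriv.mp hu).2
  have hu2 : ContDiff ℝ ∞ (deriv (deriv u)) := (contDiff_infty_iff_deriv.mp hu1).2
  have d0 : HasDerivAt u (deriv u x) x := (hu.differentiable (by norm_cast) x).hasDerivAt
  have d1 : HasDerivAt (deriv u) (deriv (deriv u) x) x :=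
    (hu1.differentiable (by norm_cast) x).hasDerivAt
  have d2 : HasDerivAt (deriv (deriv u)) (deriv (deriv (deriv u)) x) x :=
    (hu2.differentiable (by norm_cast) x).hasDerivAt
  have hne : u x ≠ 0 := (hp x).ne'
  have hH := ((d2.div d0 hne).sub
      (((d1.div d0 hne).mul (d1.div d0 hne)).const_mul (3 / 2 : ℝ))).div
    (d0.mul d0) (mul_ne_zero hne hne)
  have hK := ((((d1.mul d1).add (d0.mul d2)).const_mul (2 : ℝ)).div
      (d0.mul (d0.mul d0)) (mul_ne_zero hne (mul_ne_zero hne hne))).sub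
    (((((d0.mul d1).const_mul (2 : ℝ)).mul ((d0.mul d1).const_mul (2 : ℝ))).const_mul
        (3 / 2 : ℝ)).div (d0.mul (d0.mul (d0.mul (d0.mul d0))))
      (mul_ne_zero hne (mul_ne_zero hne (mul_ne_zero hne (mul_ne_zero hne hne)))))
  erw [hH.deriv, hK.deriv]
  simp only [Pi.add_apply, Pi.sub_apply, Pi.mul_apply, Pi.div_apply]
  field_simp
  ring

lemma rpow32 {c : ℝ} (hc : 0 < c) : (c ^ 2) ^ ((3 : ℝ) / 2) = c ^ 3 := by
  rw [← Real.rpow_natCast c 2, ← Real.rpow_mul hc.le,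
    show ((2 : ℕ) : ℝ) * ((3 : ℝ) / 2) = ((3 : ℕ) : ℝ) by norm_num, Real.rpow_natCast]

lemma rpow52 {c : ℝ} (hc : 0 < c) : (c ^ 2) ^ ((5 : ℝ) / 2) = c ^ 5 := by
  rw [← Real.rpow_natCast c 2, ← Real.rpow_mul hc.le,
    show ((2 : ℕ) : ℝ) * ((5 : ℝ) / 2) = ((5 : ℕ) : ℝ) by norm_num, Real.rpow_natCast]

/-- If `v` is smooth with `v_x > 0` and solves `v_t = S[v]/v_x²`, and `ṽ_x = v_x²`,
then `ṽ` solves `ṽ_t = ṽ_{xxx}/ṽ_x^{3/2} - (3/2)ṽ_{xx}²/ṽ_x^{5/2}` up to an additive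
function of `t`: the `x`-derivatives of the two sides agree. -/
theorem potentialisation_hodograph (v vt : ℝ → ℝ → ℝ)
    (hv : ContDiff ℝ (⊤ : ℕ∞) (fun p : ℝ × ℝ => v p.1 p.2))
    (hvt : ContDiff ℝ (⊤ : ℕ∞) (fun p : ℝ × ℝ => vt p.1 p.2))
    (hvx : ∀ x t, 0 < deriv (fun x' => v x' t) x)
    (hPDE : ∀ x t, deriv (fun t' => v x t') t =
      schwarzian (fun x' => v x' t) x / (deriv (fun x' => v x' t) x) ^ 2)
    (hlink : ∀ x t, deriv (fun x' => vt x' t) x = (deriv (fun x' => v x' t) x) ^ 2) :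
    ∀ x t,
      deriv (fun x' => deriv (fun t' => vt x' t') t) x =
      deriv (fun x' =>
        iteratedDeriv 3 (fun x'' => vt x'' t) x' /
          (deriv (fun x'' => vt x'' t) x') ^ ((3 : ℝ) / 2)
        - (3 / 2) * (iteratedDeriv 2 (fun x'' => vt x'' t) x') ^ 2 /
            (deriv (fun x'' => vt x'' t) x') ^ ((5 : ℝ) / 2)) x := by
  intro x t
  have hv' : ContDiff ℝ ∞ (fun p : ℝ × ℝ => v p.1 p.2) := hv.of_le (by simp)
  have hvt' : ContDiff ℝ ∞ (fun p : ℝ × ℝ => vt p.1 p.2) := hvt.of_le (by simp)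
  -- smoothness of x ↦ v x t and its derivatives
  have hfC : ContDiff ℝ ∞ (fun x' => v x' t) := hv'.comp (contDiff_id.prodMk contDiff_const)
  have huC : ContDiff ℝ ∞ (deriv (fun x' => v x' t)) := (contDiff_infty_iff_deriv.mp hfC).2
  have hu1C : ContDiff ℝ ∞ (deriv (deriv (fun x' => v x' t))) :=
    (contDiff_infty_iff_deriv.mp huC).2
  have hp : ∀ a, 0 < deriv (fun x' => v x' t) a := fun a => hvx a t
  have hd0 : ∀ a, HasDerivAt (deriv (fun x' => v x' t))
      (deriv (deriv (fun x' => v x' t)) a) a :=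
    fun a => (huC.differentiable (by norm_cast) a).hasDerivAt
  have hd1 : ∀ a, HasDerivAt (deriv (deriv (fun x' => v x' t)))
      (deriv (deriv (deriv (fun x' => v x' t))) a) a :=
    fun a => (hu1C.differentiable (by norm_cast) a).hasDerivAt
  -- iterated derivatives of f
  have i2f : iteratedDeriv 2 (fun x' => v x' t) = deriv (deriv (fun x' => v x' t)) := by
    rw [show (2 : ℕ) = 1 + 1 from rfl, iteratedDeriv_succ, iteratedDeriv_one]
  have i3f : iteratedDeriv 3 (fun x' => v x' t)
      = deriv (deriv (deriv (fun x' => v x' t))) := by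
    rw [show (3 : ℕ) = 2 + 1 from rfl, iteratedDeriv_succ, i2f]
  -- iterated derivatives of g = vt(·,t)
  have e2g : deriv (fun x' => vt x' t)
      = fun b => deriv (fun x' => v x' t) b * deriv (fun x' => v x' t) b :=
    funext fun a => (hlink a t).trans (pow_two _)
  have i2g : iteratedDeriv 2 (fun x' => vt x' t)
      = fun b => deriv (deriv (fun x' => v x' t)) b * deriv (fun x' => v x' t) b
          + deriv (fun x' => v x' t) b * deriv (deriv (fun x' => v x' t)) b := by
    rw [show (2 : ℕ) = 1 + 1 from rfl, iteratedDeriv_succ, iteratedDeriv_one, e2g]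
    exact funext fun b => ((hd0 b).mul (hd0 b)).deriv
  have i3g : iteratedDeriv 3 (fun x' => vt x' t)
      = fun b => (deriv (deriv (deriv (fun x' => v x' t))) b * deriv (fun x' => v x' t) b
            + deriv (deriv (fun x' => v x' t)) b * deriv (deriv (fun x' => v x' t)) b)
          + (deriv (deriv (fun x' => v x' t)) b * deriv (deriv (fun x' => v x' t)) b
            + deriv (fun x' => v x' t) b * deriv (deriv (deriv (fun x' => v x' t))) b) := by
    rw [show (3 : ℕ) = 2 + 1 from rfl, iteratedDeriv_succ, i2g]
    exact funext fun b => (((hd1 b).mul (hd0 b)).add ((hd0 b).mul (hd1 b))).deriv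
  -- rewrite the right-hand side into the `key` form
  have eRHS : (fun x' =>
        iteratedDeriv 3 (fun x'' => vt x'' t) x' /
          (deriv (fun x'' => vt x'' t) x') ^ ((3 : ℝ) / 2)
        - (3 / 2) * (iteratedDeriv 2 (fun x'' => vt x'' t) x') ^ 2 /
            (deriv (fun x'' => vt x'' t) x') ^ ((5 : ℝ) / 2))
      = fun a =>
          2 * (deriv (deriv (fun x' => v x' t)) a * deriv (deriv (fun x' => v x' t)) a
              + deriv (fun x' => v x' t) a * deriv (deriv (deriv (fun x' => v x' t))) a)
            / (deriv (fun x' => v x' t) a * (deriv (fun x' => v x' t) a * deriv (fun x' => v x' t) a))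
          - 3 / 2 * (2 * (deriv (fun x' => v x' t) a * deriv (deriv (fun x' => v x' t)) a)
              * (2 * (deriv (fun x' => v x' t) a * deriv (deriv (fun x' => v x' t)) a)))
              / (deriv (fun x' => v x' t) a * (deriv (fun x' => v x' t) a *
                  (deriv (fun x' => v x' t) a * (deriv (fun x' => v x' t) a * deriv (fun x' => v x' t) a)))) := by
    funext a
    simp only [i2g, i3g]
    rw [hlink a t, rpow32 (hp a), rpow52 (hp a)]
    field_simp
    ring
  rw [eRHS, clairaut hvt' x t]
  -- rewrite t' ↦ (vt)_x (x,t') as a square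
  have eLHS1 : (fun t' => deriv (fun x' => vt x' t') x)
      = fun t' => deriv (fun x' => v x' t') x * deriv (fun x' => v x' t') x :=
    funext fun b => (hlink x b).trans (pow_two _)
  rw [eLHS1]
  -- differentiability of W : t' ↦ v_x(x,t')
  have hWC : ContDiff ℝ ∞ (fun t' => deriv (fun x' => v x' t') x) := by
    have eW : (fun t' => deriv (fun x' => v x' t') x)
        = fun t' => fderiv ℝ (fun p : ℝ × ℝ => v p.1 p.2) (x, t') (1, 0) :=
      funext fun b => (hasDerivAt_partial_x hv' x b).deriv
    rw [eW]
    exact (smooth_fderiv_apply hv' ((1 : ℝ), (0 : ℝ))).comp (contDiff_const.prodMk contDiff_id)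
  have hWd : HasDerivAt (fun t' => deriv (fun x' => v x' t') x)
      (deriv (fun t' => deriv (fun x' => v x' t') x) t) t :=
    (hWC.differentiable (by norm_cast) t).hasDerivAt
  rw [(hWd.fun_mul hWd).deriv]
  -- the mixed derivative of v via the PDE
  have eW2 : deriv (fun t' => deriv (fun x' => v x' t') x) t
      = deriv (fun a => (deriv (deriv (deriv (fun x' => v x' t))) a / deriv (fun x' => v x' t) a
          - 3 / 2 * (deriv (deriv (fun x' => v x' t)) a / deriv (fun x' => v x' t) a
              * (deriv (deriv (fun x' => v x' t)) a / deriv (fun x' => v x' t) a)))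
          / (deriv (fun x' => v x' t) a * deriv (fun x' => v x' t) a)) x := by
    rw [← clairaut hv' x t]
    have e : (fun x' => deriv (fun t' => v x' t') t)
        = fun a => (deriv (deriv (deriv (fun x' => v x' t))) a / deriv (fun x' => v x' t) a
            - 3 / 2 * (deriv (deriv (fun x' => v x' t)) a / deriv (fun x' => v x' t) a
                * (deriv (deriv (fun x' => v x' t)) a / deriv (fun x' => v x' t) a)))
            / (deriv (fun x' => v x' t) a * deriv (fun x' => v x' t) a) := by
      funext a
      rw [hPDE a t]
      unfold schwarzian
      rw [i2f, i3f]
      ring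
    rw [e]
  rw [eW2]
  linear_combination key (deriv (fun x' => v x' t)) huC hp x
end

section
/- Let Ψ: ℝ → ℝ be a solution of the ODE 5Ψ'Ψ''' - 8(Ψ'')² = 0 with Ψ'' nowhere zero. Then on each interval Ψ has the form Ψ(s) = c₁(s + c₂)^{-2/3} + c₃ for constants c₁ ≠ 0, c₂, c₃ (with s + c₂ of constant sign). Conversely, every function of this form satisfies 5Ψ'Ψ''' - 8(Ψ'')² = 0 where defined. -/
lemma myconst_of_deriv_zero {f : ℝ → ℝ} {a b : ℝ}
    (hf : ∀ s ∈ Set.Ioo a b, HasDerivAt f 0 s) :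
    ∀ x ∈ Set.Ioo a b, ∀ y ∈ Set.Ioo a b, f x = f y := by
  have key : ∀ x ∈ Set.Ioo a b, ∀ y ∈ Set.Ioo a b, x < y → f x = f y := by
    intro x hx y hy hxy
    have hsub : Set.Ioo x y ⊆ Set.Ioo a b := fun s hs => ⟨hx.1.trans hs.1, hs.2.trans hy.2⟩
    have hsub' : Set.Icc x y ⊆ Set.Ioo a b := fun s hs =>
      ⟨lt_of_lt_of_le hx.1 hs.1, lt_of_le_of_lt hs.2 hy.2⟩
    obtain ⟨c, _, hc⟩ := exists_hasDerivAt_eq_slope f (fun _ => (0:ℝ)) hxy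
      (fun s hs => ((hf s (hsub' hs)).continuousAt).continuousWithinAt)
      (fun s hs => hf s (hsub hs))
    have h' := hc.symm
    rw [div_eq_iff (sub_ne_zero.mpr hxy.ne')] at h'
    linarith
  intro x hx y hy
  rcases lt_trichotomy x y with h | h | h
  · exact key x hx y hy h
  · rw [h]
  · exact (key y hy x hx h).symm

lemma mysign_const {f : ℝ → ℝ} {a b : ℝ} (hf : ContinuousOn f (Set.Ioo a b))
    (h : ∀ s ∈ Set.Ioo a b, f s ≠ 0) :
    (∀ s ∈ Set.Ioo a b, 0 < f s) ∨ (∀ s ∈ Set.Ioo a b, f s < 0) := by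
  by_contra hcon
  push_neg at hcon
  obtain ⟨⟨x, hx, hx0⟩, ⟨y, hy, hy0⟩⟩ := hcon
  have hxneg : f x < 0 := lt_of_le_of_ne hx0 (h x hx)
  have hypos : 0 < f y := lt_of_le_of_ne hy0 (Ne.symm (h y hy))
  have hsub : Set.uIcc x y ⊆ Set.Ioo a b :=
    (Set.ordConnected_Ioo).uIcc_subset hx hy
  have : (0:ℝ) ∈ f '' Set.uIcc x y := by
    apply intermediate_value_uIcc (hf.mono hsub)
    rw [Set.mem_uIcc]
    left; exact ⟨hxneg.le, hypos.le⟩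
  obtain ⟨z, hz, hz0⟩ := this
  exact h z (hsub hz) hz0


lemma myabs_rpow (x : ℝ) : |x| ^ (-(2:ℝ)/3) = ((x^2 : ℝ)) ^ (-(1:ℝ)/3) := by
  rw [← Real.sqrt_sq_eq_abs, Real.sqrt_eq_rpow, ← Real.rpow_mul (sq_nonneg x)]
  norm_num

/-- The ODE `5Ψ'Ψ''' - 8(Ψ'')² = 0` with `Ψ'' ≠ 0` has general solution
`Ψ(s) = c₁(s+c₂)^{-2/3} + c₃` (with `s + c₂` of constant sign), and conversely
every such function solves the ODE where defined. -/
theorem fifth_order_nonlinearity_ODE (a b : ℝ) (hab : a < b) (Ψ : ℝ → ℝ)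
    (hΨ : ContDiff ℝ (⊤ : ℕ∞) Ψ)
    (hΨ'' : ∀ s ∈ Set.Ioo a b, iteratedDeriv 2 Ψ s ≠ 0)
    (hODE : ∀ s ∈ Set.Ioo a b,
      5 * deriv Ψ s * iteratedDeriv 3 Ψ s - 8 * (iteratedDeriv 2 Ψ s) ^ 2 = 0) :
    (∃ c₁ c₂ c₃ : ℝ, c₁ ≠ 0 ∧
      ((∀ s ∈ Set.Ioo a b, 0 < s + c₂) ∨ (∀ s ∈ Set.Ioo a b, s + c₂ < 0)) ∧
      ∀ s ∈ Set.Ioo a b, Ψ s = c₁ * |s + c₂| ^ (-(2 : ℝ) / 3) + c₃) ∧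
    (∀ c₁ c₂ c₃ : ℝ, c₁ ≠ 0 → ∀ s : ℝ, s + c₂ ≠ 0 →
      5 * deriv (fun s' => c₁ * |s' + c₂| ^ (-(2 : ℝ) / 3) + c₃) s *
          iteratedDeriv 3 (fun s' => c₁ * |s' + c₂| ^ (-(2 : ℝ) / 3) + c₃) s
        - 8 * (iteratedDeriv 2 (fun s' => c₁ * |s' + c₂| ^ (-(2 : ℝ) / 3) + c₃) s) ^ 2
        = 0) := by
  constructor
  · -- forward direction
    have hsm : ContDiff ℝ (⊤ : ℕ∞) Ψ := hΨ.of_le (by simp)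
    set v : ℝ → ℝ := deriv Ψ with hvdef
    set w : ℝ → ℝ := deriv v with hwdef
    set z : ℝ → ℝ := deriv w with hzdef
    have hdiff : ∀ n : ℕ, Differentiable ℝ (deriv^[n] Ψ) := by
      intro n
      exact (hsm.iterate_deriv n).differentiable (by simp)
    have hΨd : Differentiable ℝ Ψ := hdiff 0
    have hvd : Differentiable ℝ v := hdiff 1
    have hwd : Differentiable ℝ w := hdiff 2
    have h2 : iteratedDeriv 2 Ψ = w := by rw [iteratedDeriv_eq_iterate]; rfl
    have h3 : iteratedDeriv 3 Ψ = z := by rw [iteratedDeriv_eq_iterate]; rfl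
    have hode : ∀ s ∈ Set.Ioo a b, 5 * v s * z s = 8 * w s ^ 2 := by
      intro s hs
      have := hODE s hs
      rw [h2, h3] at this
      linarith
    have hwne : ∀ s ∈ Set.Ioo a b, w s ≠ 0 := by
      intro s hs
      have := hΨ'' s hs
      rwa [h2] at this
    have hvne : ∀ s ∈ Set.Ioo a b, v s ≠ 0 := by
      intro s hs h0
      have h8 := hode s hs
      rw [h0] at h8
      have : w s = 0 := by
        have : w s ^ 2 = 0 := by linarith
        exact pow_eq_zero_iff two_ne_zero |>.mp this
      exact hwne s hs this
    obtain ⟨ε, hε1, hεv⟩ : ∃ ε : ℝ, ε * ε = 1 ∧ ∀ s ∈ Set.Ioo a b, 0 < ε * v s := by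
      rcases mysign_const (hvd.continuous.continuousOn) hvne with hpos | hneg
      · exact ⟨1, by norm_num, fun s hs => by simpa using hpos s hs⟩
      · exact ⟨-1, by norm_num, fun s hs => by simpa using hneg s hs⟩
    have hεne : ε ≠ 0 := by intro h; rw [h] at hε1; norm_num at hε1
    set I := Set.Ioo a b with hI
    set u : ℝ → ℝ := fun s => ε * v s with hudef
    have hu : ∀ s, HasDerivAt u (ε * w s) s := fun s => ((hvd s).hasDerivAt).const_mul ε
    set q : ℝ → ℝ := fun s => u s ^ (-(3:ℝ)/5) with hqdef
    set r : ℝ → ℝ := fun s => (-(3:ℝ)/5 * u s ^ (-(3:ℝ)/5 - 1)) * (ε * w s) with hrdef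
    have hq : ∀ s ∈ I, HasDerivAt q (r s) s := by
      intro s hs
      have h := (Real.hasDerivAt_rpow_const (x := u s) (p := -(3:ℝ)/5)
        (Or.inl (hεv s hs).ne')).comp s (hu s)
      exact h
    have hr0 : ∀ s ∈ I, HasDerivAt r 0 s := by
      intro s hs
      have hA : HasDerivAt (fun s' => -(3:ℝ)/5 * u s' ^ (-(3:ℝ)/5 - 1))
          (-(3:ℝ)/5 * (((-(3:ℝ)/5 - 1) * u s ^ (-(3:ℝ)/5 - 1 - 1)) * (ε * w s))) s := by
        exact ((Real.hasDerivAt_rpow_const (x := u s) (p := -(3:ℝ)/5 - 1)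
          (Or.inl (hεv s hs).ne')).comp s (hu s)).const_mul (-(3:ℝ)/5)
      have hB : HasDerivAt (fun s' => ε * w s') (ε * z s) s := ((hwd s).hasDerivAt).const_mul ε
      have h := hA.mul hB
      convert h using 1
      · rfl
      · rfl
      · rfl
      have hu1 : u s ^ (-(3:ℝ)/5 - 1) = u s ^ (-(3:ℝ)/5 - 1 - 1) * u s := by
        rw [← Real.rpow_add_one (hεv s hs).ne' (-(3:ℝ)/5 - 1 - 1)]
        norm_num
        rfl
      have hode' := hode s hs
      simp only [hudef] at hu1 ⊢
      linear_combination ((3:ℝ)/5 * ε * z s) * hu1 +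
        ((3:ℝ)/25 * ε * ε * ((ε * v s) ^ (-(3:ℝ)/5 - 1 - 1))) * hode'
    set s₀ : ℝ := (a+b)/2 with hs₀def
    have hs₀ : s₀ ∈ I := ⟨by simp only [hs₀def]; linarith, by simp only [hs₀def]; linarith⟩
    set α : ℝ := r s₀ with hαdef
    have hrconst : ∀ s ∈ I, r s = α := fun s hs => myconst_of_deriv_zero hr0 s hs s₀ hs₀
    have hα : α ≠ 0 := by
      rw [hαdef, hrdef]
      exact mul_ne_zero
        (mul_ne_zero (by norm_num) (Real.rpow_pos_of_pos (hεv s₀ hs₀) _).ne')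
        (mul_ne_zero hεne (hwne s₀ hs₀))
    set g : ℝ → ℝ := fun s => q s - α * s with hgdef
    have hg0 : ∀ s ∈ I, HasDerivAt g 0 s := by
      intro s hs
      have h := (hq s hs).sub ((hasDerivAt_id s).const_mul α)
      convert h using 1
      · rfl
      · rfl
      · rfl
      rw [hrconst s hs]
      ring
    set β : ℝ := g s₀ with hβdef
    have hlin : ∀ s ∈ I, q s = α * s + β := by
      intro s hs
      have hth := myconst_of_deriv_zero hg0 s hs s₀ hs₀
      have hβ : β = q s₀ - α * s₀ := by simp only [hβdef, hgdef]
      simp only [hgdef] at hth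
      linarith
    have hqpos : ∀ s ∈ I, 0 < α * s + β := by
      intro s hs
      rw [← hlin s hs]
      exact Real.rpow_pos_of_pos (hεv s hs) _
    have hurec : ∀ s ∈ I, v s = ε * (α * s + β) ^ (-(5:ℝ)/3) := by
      intro s hs
      have h1 : ((ε * v s) ^ (-(3:ℝ)/5)) ^ (-(5:ℝ)/3) = ε * v s := by
        rw [← Real.rpow_mul (hεv s hs).le]
        norm_num
      have h2' : q s = α * s + β := hlin s hs
      simp only [hqdef, hudef] at h2'
      rw [← h2', h1]
      linear_combination (-(v s)) * hε1
    set G : ℝ → ℝ := fun s => (α * s + β) ^ (-(2:ℝ)/3) with hGdef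
    have hGd : ∀ s ∈ I, HasDerivAt G ((-(2:ℝ)/3) * (α * s + β) ^ (-(2:ℝ)/3 - 1) * α) s := by
      intro s hs
      have hin : HasDerivAt (fun s' : ℝ => α * s' + β) α s := by
        simpa using ((hasDerivAt_id s).const_mul α).add_const β
      have h := (Real.hasDerivAt_rpow_const (x := α * s + β) (p := -(2:ℝ)/3)
        (Or.inl (hqpos s hs).ne')).comp s hin
      exact h
    set k : ℝ := -(3*ε)/(2*α) with hkdef
    have hk : k ≠ 0 := by
      rw [hkdef]
      exact div_ne_zero (by simpa using hεne) (by simpa using hα)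
    have hP0 : ∀ s ∈ I, HasDerivAt (fun s' => Ψ s' - k * G s') 0 s := by
      intro s hs
      have h := ((hΨd s).hasDerivAt).sub ((hGd s hs).const_mul k)
      convert h using 1
      · rfl
      · rfl
      · rfl
      have e : (-(2:ℝ)/3 - 1) = -(5:ℝ)/3 := by norm_num
      rw [e, ← hvdef, hurec s hs, hkdef]
      field_simp
      ring
    set c₃ : ℝ := Ψ s₀ - k * G s₀ with hc₃def
    have hP : ∀ s ∈ I, Ψ s = k * G s + c₃ := by
      intro s hs
      have := myconst_of_deriv_zero hP0 s hs s₀ hs₀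
      rw [hc₃def]
      linarith
    set c₂ : ℝ := β / α with hc₂def
    set c₁ : ℝ := k * |α| ^ (-(2:ℝ)/3) with hc₁def
    have hαabs : (0:ℝ) < |α| := abs_pos.mpr hα
    have hc₁ : c₁ ≠ 0 := mul_ne_zero hk (Real.rpow_pos_of_pos hαabs _).ne'
    have hprod : ∀ s : ℝ, α * (s + c₂) = α * s + β := by
      intro s
      rw [hc₂def]
      field_simp
    have hsign : (∀ s ∈ I, 0 < s + c₂) ∨ (∀ s ∈ I, s + c₂ < 0) := by
      rcases hα.lt_or_gt with hneg | hpos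
      · right
        intro s hs
        have h1 := hqpos s hs
        rw [← hprod s] at h1
        nlinarith
      · left
        intro s hs
        have h1 := hqpos s hs
        rw [← hprod s] at h1
        nlinarith
    refine ⟨c₁, c₂, c₃, hc₁, hsign, ?_⟩
    intro s hs
    have habs : |s + c₂| = (α * s + β) * |α|⁻¹ := by
      have h1 : |α| * |s + c₂| = α * s + β := by
        rw [← abs_mul, hprod s]
        exact abs_of_pos (hqpos s hs)
      field_simp at h1 ⊢
      linarith
    have hrpow1 : |s + c₂| ^ (-(2:ℝ)/3)
        = (α * s + β) ^ (-(2:ℝ)/3) * (|α|⁻¹) ^ (-(2:ℝ)/3) := by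
      rw [habs, Real.mul_rpow (hqpos s hs).le (inv_nonneg.mpr hαabs.le)]
    have hrpow2 : (|α|⁻¹) ^ (-(2:ℝ)/3) = (|α| ^ (-(2:ℝ)/3))⁻¹ := by
      rw [← Real.rpow_neg_one |α|, ← Real.rpow_mul hαabs.le, ← Real.rpow_neg_one (|α| ^ (-(2:ℝ)/3)),
        ← Real.rpow_mul hαabs.le]
      norm_num
    have hGs : G s = (α * s + β) ^ (-(2:ℝ)/3) := rfl
    have hne : |α| ^ (-(2:ℝ)/3) ≠ 0 := (Real.rpow_pos_of_pos hαabs _).ne'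
    rw [hP s hs, hrpow1, hrpow2, hGs, hc₁def]
    field_simp
  · -- converse direction
    intro c₁ c₂ c₃ _hc₁ s hs
    have hfun : (fun s' => c₁ * |s' + c₂| ^ (-(2 : ℝ) / 3) + c₃)
        = (fun s' => c₁ * ((s' + c₂)^2) ^ (-(1:ℝ)/3) + c₃) := by
      funext t; rw [myabs_rpow]
    rw [hfun]
    set F : ℝ → ℝ := fun s' => c₁ * ((s' + c₂)^2) ^ (-(1:ℝ)/3) + c₃ with hF
    set F1 : ℝ → ℝ := fun s' => c₁ * (-(2:ℝ)/3) * ((s' + c₂) * ((s' + c₂)^2) ^ (-(4:ℝ)/3)) with hF1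
    set F2 : ℝ → ℝ := fun s' => c₁ * ((10:ℝ)/9) * (((s' + c₂)^2) ^ (-(4:ℝ)/3)) with hF2
    set F3 : ℝ → ℝ := fun s' => c₁ * (-(80:ℝ)/27) * ((s' + c₂) * ((s' + c₂)^2) ^ (-(7:ℝ)/3)) with hF3
    set U : Set ℝ := {t : ℝ | t + c₂ ≠ 0} with hU
    have hUopen : IsOpen U := isOpen_ne.preimage (by fun_prop)
    -- basic derivative of inner square
    have hsq : ∀ t : ℝ, HasDerivAt (fun s' : ℝ => (s' + c₂)^2) (2*(t + c₂)) t := by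
      intro t
      have := ((hasDerivAt_id t).add_const c₂).pow 2
      exact this.congr_deriv (by simp)
    have hQpos : ∀ t ∈ U, (0:ℝ) < (t + c₂)^2 := fun t ht => lt_of_le_of_ne (sq_nonneg _) (Ne.symm (pow_ne_zero 2 ht))
    have hrpow : ∀ (p : ℝ), ∀ t ∈ U,
        HasDerivAt (fun s' : ℝ => ((s' + c₂)^2) ^ p)
          (p * ((t + c₂)^2) ^ (p - 1) * (2*(t + c₂))) t := by
      intro p t ht
      exact (Real.hasDerivAt_rpow_const (Or.inl (hQpos t ht).ne')).comp t (hsq t)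
    have hdF : ∀ t ∈ U, HasDerivAt F (F1 t) t := by
      intro t ht
      have h := ((hrpow (-(1:ℝ)/3) t ht).const_mul c₁).add_const c₃
      convert h using 1
      · rfl
      · rfl
      have e : (-(1:ℝ)/3 - 1) = -(4:ℝ)/3 := by norm_num
      rw [hF1]; simp only [e]; ring
    have hdF1 : ∀ t ∈ U, HasDerivAt F1 (F2 t) t := by
      intro t ht
      have hin : HasDerivAt (fun s' : ℝ => (s' + c₂) * ((s' + c₂)^2) ^ (-(4:ℝ)/3))
          (1 * ((t + c₂)^2) ^ (-(4:ℝ)/3)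
            + (t + c₂) * ((-(4:ℝ)/3) * ((t + c₂)^2) ^ (-(4:ℝ)/3 - 1) * (2*(t + c₂)))) t :=
        ((hasDerivAt_id t).add_const c₂).mul (hrpow (-(4:ℝ)/3) t ht)
      have h := hin.const_mul (c₁ * (-(2:ℝ)/3))
      convert h using 1
      · rfl
      · rfl
      have key : ((t + c₂)^2) ^ (-(4:ℝ)/3 - 1) * (t + c₂)^2 = ((t + c₂)^2) ^ (-(4:ℝ)/3) := by
        rw [← Real.rpow_add_one (hQpos t ht).ne' (-(4:ℝ)/3 - 1)]
        norm_num
      rw [hF2]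
      linear_combination (-(16:ℝ)/9 * c₁) * key
    have hdF2 : ∀ t ∈ U, HasDerivAt F2 (F3 t) t := by
      intro t ht
      have h := (hrpow (-(4:ℝ)/3) t ht).const_mul (c₁ * ((10:ℝ)/9))
      convert h using 1
      · rfl
      · rfl
      have e : (-(4:ℝ)/3 - 1) = -(7:ℝ)/3 := by norm_num
      rw [hF3, e]; ring
    have hd1 : ∀ t ∈ U, deriv F t = F1 t := fun t ht => (hdF t ht).deriv
    have hd2 : ∀ t ∈ U, deriv (deriv F) t = F2 t := by
      intro t ht
      have heq : deriv F =ᶠ[nhds t] F1 :=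
        Filter.eventually_of_mem (hUopen.mem_nhds ht) (fun y hy => (hdF y hy).deriv)
      rw [heq.deriv_eq]; exact (hdF1 t ht).deriv
    have hd3 : ∀ t ∈ U, deriv (deriv (deriv F)) t = F3 t := by
      intro t ht
      have heq : deriv (deriv F) =ᶠ[nhds t] F2 :=
        Filter.eventually_of_mem (hUopen.mem_nhds ht) (fun y hy => hd2 y hy)
      rw [heq.deriv_eq]; exact (hdF2 t ht).deriv
    have hsU : s ∈ U := hs
    have h3 : iteratedDeriv 3 F = deriv (deriv (deriv F)) := by
      rw [iteratedDeriv_eq_iterate]; rfl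
    have h2 : iteratedDeriv 2 F = deriv (deriv F) := by
      rw [iteratedDeriv_eq_iterate]; rfl
    rw [h3, h2, hd1 s hsU, hd2 s hsU, hd3 s hsU]
    have hq := hQpos s hsU
    have e1 : ((s+c₂)^2) ^ (-(4:ℝ)/3) * (((s+c₂)^2) ^ (-(7:ℝ)/3) * (s+c₂)^2)
        = ((s+c₂)^2) ^ (-(4:ℝ)/3) * ((s+c₂)^2) ^ (-(4:ℝ)/3) := by
      rw [← Real.rpow_add_one hq.ne' (-(7:ℝ)/3), ← Real.rpow_add hq, ← Real.rpow_add hq]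
      norm_num
    simp only [hF1, hF2, hF3]
    linear_combination ((800:ℝ)/81 * c₁^2) * e1
end

section
/- Let Φ₁ be a smooth function of the single variable p (standing for u_{xxx}) satisfying (7/9)Φ₁²Φ₁''' - 3Φ₁Φ₁'Φ₁'' + (16/7)(Φ₁')³ = 0 with Φ₁ > 0. Then every function of the form Φ₁(p) = φ₁/((p + φ₂)² + φ₃)^{7/2} with constants φ₁ > 0, φ₂, φ₃ satisfies this ODE wherever (p+φ₂)² + φ₃ > 0. -/
noncomputable def G0 (φ₁ φ₂ φ₃ : ℝ) (x : ℝ) : ℝ :=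
  φ₁ * ((x + φ₂) ^ 2 + φ₃) ^ (-7/2 : ℝ)

noncomputable def G1 (φ₁ φ₂ φ₃ : ℝ) (x : ℝ) : ℝ :=
  -7 * φ₁ * ((x + φ₂) * ((x + φ₂) ^ 2 + φ₃) ^ (-9/2 : ℝ))

noncomputable def G2 (φ₁ φ₂ φ₃ : ℝ) (x : ℝ) : ℝ :=
  -7 * φ₁ * (((x + φ₂) ^ 2 + φ₃) ^ (-9/2 : ℝ)
    + (-9) * (x + φ₂) ^ 2 * ((x + φ₂) ^ 2 + φ₃) ^ (-11/2 : ℝ))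

noncomputable def G3 (φ₁ φ₂ φ₃ : ℝ) (x : ℝ) : ℝ :=
  -7 * φ₁ * ((-27) * (x + φ₂) * ((x + φ₂) ^ 2 + φ₃) ^ (-11/2 : ℝ)
    + 99 * (x + φ₂) ^ 3 * ((x + φ₂) ^ 2 + φ₃) ^ (-13/2 : ℝ))

lemma hasDerivAt_base (φ₂ φ₃ x : ℝ) :
    HasDerivAt (fun y : ℝ => (y + φ₂) ^ 2 + φ₃) (2 * (x + φ₂)) x := by
  have := (((hasDerivAt_id x).add_const φ₂).pow 2).add_const φ₃
  simpa using this

lemma hasDerivAt_rpow_base (φ₂ φ₃ : ℝ) (e x : ℝ) (hx : 0 < (x + φ₂) ^ 2 + φ₃) :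
    HasDerivAt (fun y : ℝ => ((y + φ₂) ^ 2 + φ₃) ^ e)
      (2 * (x + φ₂) * e * ((x + φ₂) ^ 2 + φ₃) ^ (e - 1)) x :=
  (hasDerivAt_base φ₂ φ₃ x).rpow_const (Or.inl hx.ne')

lemma hasDerivAt_G0 (φ₁ φ₂ φ₃ x : ℝ) (hx : 0 < (x + φ₂) ^ 2 + φ₃) :
    HasDerivAt (G0 φ₁ φ₂ φ₃) (G1 φ₁ φ₂ φ₃ x) x := by
  have h := (hasDerivAt_rpow_base φ₂ φ₃ (-7/2) x hx).const_mul φ₁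
  have he : (-7/2 : ℝ) - 1 = -9/2 := by norm_num
  rw [he] at h
  unfold G0 G1
  refine h.congr_deriv ?_
  set B := ((x + φ₂) ^ 2 + φ₃) ^ (-9/2 : ℝ)
  ring

lemma hasDerivAt_G1 (φ₁ φ₂ φ₃ x : ℝ) (hx : 0 < (x + φ₂) ^ 2 + φ₃) :
    HasDerivAt (G1 φ₁ φ₂ φ₃) (G2 φ₁ φ₂ φ₃ x) x := by
  have h := (((hasDerivAt_id x).add_const φ₂).mul
      (hasDerivAt_rpow_base φ₂ φ₃ (-9/2) x hx)).const_mul (-7 * φ₁)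
  have he : (-9/2 : ℝ) - 1 = -11/2 := by norm_num
  rw [he] at h
  unfold G1 G2
  refine h.congr_deriv ?_
  simp only [id_eq]
  set B1 := ((x + φ₂) ^ 2 + φ₃) ^ (-9/2 : ℝ)
  set B2 := ((x + φ₂) ^ 2 + φ₃) ^ (-11/2 : ℝ)
  ring

lemma hasDerivAt_G2 (φ₁ φ₂ φ₃ x : ℝ) (hx : 0 < (x + φ₂) ^ 2 + φ₃) :
    HasDerivAt (G2 φ₁ φ₂ φ₃) (G3 φ₁ φ₂ φ₃ x) x := by
  have hsq : HasDerivAt (fun y : ℝ => (-9 : ℝ) * (y + φ₂) ^ 2)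
      ((-9 : ℝ) * (2 * (x + φ₂))) x := by
    have := (((hasDerivAt_id x).add_const φ₂).pow 2).const_mul (-9 : ℝ)
    simpa using this
  have h := ((hasDerivAt_rpow_base φ₂ φ₃ (-9/2) x hx).add
      (hsq.mul (hasDerivAt_rpow_base φ₂ φ₃ (-11/2) x hx))).const_mul (-7 * φ₁)
  have he1 : (-9/2 : ℝ) - 1 = -11/2 := by norm_num
  have he2 : (-11/2 : ℝ) - 1 = -13/2 := by norm_num
  rw [he1, he2] at h
  unfold G2 G3
  refine h.congr_deriv ?_
  set B2 := ((x + φ₂) ^ 2 + φ₃) ^ (-11/2 : ℝ)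
  set B3 := ((x + φ₂) ^ 2 + φ₃) ^ (-13/2 : ℝ)
  ring

lemma deriv_eqOn' {f g g1 : ℝ → ℝ} {U : Set ℝ} (hU : IsOpen U)
    (hfg : ∀ x ∈ U, f x = g x) (hg : ∀ x ∈ U, HasDerivAt g (g1 x) x) :
    ∀ x ∈ U, deriv f x = g1 x := by
  intro x hx
  have hev : f =ᶠ[nhds x] g := Filter.eventuallyEq_of_mem (hU.mem_nhds hx) hfg
  rw [hev.deriv_eq, (hg x hx).deriv]

/-- Every function `Φ₁(p) = φ₁/((p+φ₂)² + φ₃)^{7/2}` with `φ₁ > 0` satisfies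
`(7/9)Φ₁²Φ₁''' - 3Φ₁Φ₁'Φ₁'' + (16/7)(Φ₁')³ = 0` wherever `(p+φ₂)² + φ₃ > 0`. -/
theorem seventh_order_leading_coefficient (φ₁ φ₂ φ₃ : ℝ) (hφ₁ : 0 < φ₁)
    (Φ₁ : ℝ → ℝ)
    (hΦ₁ : Φ₁ = fun p => φ₁ / ((p + φ₂) ^ 2 + φ₃) ^ ((7 : ℝ) / 2)) :
    ∀ p : ℝ, 0 < (p + φ₂) ^ 2 + φ₃ →
      (7 / 9) * (Φ₁ p) ^ 2 * iteratedDeriv 3 Φ₁ p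
        - 3 * Φ₁ p * deriv Φ₁ p * iteratedDeriv 2 Φ₁ p
        + (16 / 7) * (deriv Φ₁ p) ^ 3 = 0 := by
  intro p hp
  set U : Set ℝ := {x | 0 < (x + φ₂) ^ 2 + φ₃} with hUdef
  have hU : IsOpen U := by
    have : Continuous fun x : ℝ => (x + φ₂) ^ 2 + φ₃ := by continuity
    exact isOpen_lt continuous_const this
  have hpU : p ∈ U := hp
  -- Φ₁ agrees with G0 on U
  have hΦG : ∀ x ∈ U, Φ₁ x = G0 φ₁ φ₂ φ₃ x := by
    intro x hx
    have hx' : (0:ℝ) < (x + φ₂) ^ 2 + φ₃ := hx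
    rw [hΦ₁]
    simp only [G0]
    rw [show (-7/2 : ℝ) = -(7/2) by norm_num, Real.rpow_neg hx'.le]
    rw [div_eq_mul_inv]
  have hd1 : ∀ x ∈ U, deriv Φ₁ x = G1 φ₁ φ₂ φ₃ x :=
    deriv_eqOn' hU hΦG (fun x hx => hasDerivAt_G0 φ₁ φ₂ φ₃ x hx)
  have hd2 : ∀ x ∈ U, deriv (deriv Φ₁) x = G2 φ₁ φ₂ φ₃ x :=
    deriv_eqOn' hU hd1 (fun x hx => hasDerivAt_G1 φ₁ φ₂ φ₃ x hx)
  have hd3 : ∀ x ∈ U, deriv (deriv (deriv Φ₁)) x = G3 φ₁ φ₂ φ₃ x :=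
    deriv_eqOn' hU hd2 (fun x hx => hasDerivAt_G2 φ₁ φ₂ φ₃ x hx)
  have hi2 : iteratedDeriv 2 Φ₁ = deriv (deriv Φ₁) := by
    ext x; simp [iteratedDeriv_succ, iteratedDeriv_zero]
  have hi3 : iteratedDeriv 3 Φ₁ = deriv (deriv (deriv Φ₁)) := by
    ext x; simp [iteratedDeriv_succ, iteratedDeriv_zero]
  rw [hi2, hi3, hΦG p hpU, hd1 p hpU, hd2 p hpU, hd3 p hpU]
  -- now pure algebra
  set s := p + φ₂ with hs
  set t := s ^ 2 + φ₃ with ht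
  have ht0 : (0:ℝ) < t := hp
  set A := t ^ (-7/2 : ℝ) with hA
  have e1 : t ^ (-9/2 : ℝ) = A / t := by
    rw [show (-9/2 : ℝ) = -7/2 - 1 by norm_num, Real.rpow_sub ht0, Real.rpow_one]
  have e2 : t ^ (-11/2 : ℝ) = A / t / t := by
    rw [show (-11/2 : ℝ) = -9/2 - 1 by norm_num, Real.rpow_sub ht0, Real.rpow_one, e1]
  have e3 : t ^ (-13/2 : ℝ) = A / t / t / t := by
    rw [show (-13/2 : ℝ) = -11/2 - 1 by norm_num, Real.rpow_sub ht0, Real.rpow_one, e2]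
  simp only [G0, G1, G2, G3, ← hs, ← ht, ← hA, e1, e2, e3]
  field_simp
  ring
end
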